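/- arXiv:1411.0524 — 3 statements merged into one kernel-verified Lean document; each statement's English description precedes it below -/
import Mathlib

section
/- Let K be a field, A a 2×2 matrix over K, and σ₁ : M₂(K) → K a K-linear functional with σ₁(Id) = 0 and σ₁(A) ≠ 0. Then for every integer k ≥ 0, tr(Sym^k A) = σ₁(A^{k+1}) / σ₁(A). -/
open MvPolynomial Finset

/-- The endomorphism induced by the matrix `A` on the space of homogeneous polynomials of
degree `k` in `n` variables (a model for the `k`-th symmetric power of `K^n`). -/
noncomputable def symPowMap {K : Type*} [Field K] {n : ℕ} (A : Matrix (Fin n) (Fin n) K) (k : ℕ) :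
    homogeneousSubmodule (Fin n) K k →ₗ[K] homogeneousSubmodule (Fin n) K k :=
  LinearMap.restrict
    (MvPolynomial.aeval fun i => ∑ j, A i j • X j :
      MvPolynomial (Fin n) K →ₐ[K] MvPolynomial (Fin n) K).toLinearMap
    (fun p hp => by
      rw [mem_homogeneousSubmodule] at hp ⊢
      have hg : ∀ i : Fin n, (∑ j, A i j • X j : MvPolynomial (Fin n) K).IsHomogeneous 1 := by
        intro i
        apply IsHomogeneous.sum
        intro j _
        rw [smul_eq_C_mul]
        exact (isHomogeneous_X K j).C_mul (A i j)
      have := hp.aeval (fun i => ∑ j, A i j • X j) hg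
      simpa using this)

/-- `trSymPow A k = tr(Sym^k A)`, the trace of the `k`-th symmetric power of `A`. -/
noncomputable def trSymPow {K : Type*} [Field K] {n : ℕ} (A : Matrix (Fin n) (Fin n) K)
    (k : ℕ) : K :=
  LinearMap.trace K _ (symPowMap A k)

/-- `tr(Sym^k A)` for an integer index, with the convention `tr(Sym^k A) = 0` for `k < 0`. -/
noncomputable def trSymPowZ {K : Type*} [Field K] {n : ℕ} (A : Matrix (Fin n) (Fin n) K)
    (k : ℤ) : K :=
  if 0 ≤ k then trSymPow A k.toNat else 0


/-! In two variables `x = X 0`, `y = X 1`, the Koszul sequence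
`0 → S^k → S^(k+1) × S^(k+1) → S^(k+2) → 0`, `r ↦ (y r, -x r)`, `(p, q) ↦ x p + y q`, is exact,
and it intertwines `det A • Sym^k A`, the map `Sym^(k+1) A ⊗ Aᵀ` and `Sym^(k+2) A`. Additivity
of the trace along it gives `tr Sym^(k+2) A = tr A · tr Sym^(k+1) A - det A · tr Sym^k A`.
By Cayley–Hamilton, `k ↦ σ₁ (A ^ (k+1))` satisfies the same recursion, and `σ₁ 1 = 0` makes
the two sequences `tr Sym^k A · σ₁ A` and `σ₁ (A ^ (k+1))` agree for `k = 0, 1`. -/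

namespace LinearMap

variable {K M N P : Type*} [Field K] [AddCommGroup M] [Module K M] [AddCommGroup N] [Module K N]
  [AddCommGroup P] [Module K P]

theorem trace_prod_eq_add [FiniteDimensional K M] [FiniteDimensional K N]
    (f : M × N →ₗ[K] M × N) :
    trace K (M × N) f = trace K M (fst K M N ∘ₗ f ∘ₗ inl K M N)
      + trace K N (snd K M N ∘ₗ f ∘ₗ inr K M N) := by
  have hf : f = inl K M N ∘ₗ fst K M N ∘ₗ f + inr K M N ∘ₗ snd K M N ∘ₗ f := by
    ext x <;> simp
  conv_lhs => rw [hf]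
  rw [map_add, trace_comp_comm', trace_comp_comm' _ (inr K M N), comp_assoc, comp_assoc]

theorem trace_eq_add_of_exact [FiniteDimensional K M] [FiniteDimensional K P]
    {f : M →ₗ[K] N} {g : N →ₗ[K] P} (hfg : Function.Exact f g)
    (hf : Function.Injective f) (hg : Function.Surjective g)
    {φM : M →ₗ[K] M} {φN : N →ₗ[K] N} {φP : P →ₗ[K] P}
    (hφf : φN ∘ₗ f = f ∘ₗ φM) (hφg : g ∘ₗ φN = φP ∘ₗ g) :
    trace K N φN = trace K M φM + trace K P φP := by
  obtain ⟨l, hl⟩ := g.exists_rightInverse_of_surjective (range_eq_top.mpr hg)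
  obtain ⟨e, hfe, hge⟩ := hfg.splitSurjectiveEquiv hf ⟨l, hl⟩
  rw [← trace_conj' φN e, trace_prod_eq_add]
  congr 2
  · ext x
    have := congr($hφf x)
    simp only [hfe, coe_comp, Function.comp_apply, LinearEquiv.coe_coe, inl_apply] at this
    simp [LinearEquiv.conj_apply, this]
  · ext y
    have := congr($hφg (e.symm (0, y)))
    simp only [hge, coe_comp, Function.comp_apply] at this
    simpa [LinearEquiv.conj_apply] using this

end LinearMap

theorem Matrix.sq_eq_trace_smul_sub_det_smul {R : Type*} [CommRing R]
    (A : Matrix (Fin 2) (Fin 2) R) :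
    A ^ 2 = A.trace • A - A.det • 1 := by
  nontriviality R
  have h := A.aeval_self_charpoly
  rw [charpoly_fin_two] at h
  simp [Algebra.algebraMap_eq_smul_one] at h
  rw [← sub_eq_zero, ← h]
  abel

theorem Matrix.pow_add_two_eq {R : Type*} [CommRing R] (A : Matrix (Fin 2) (Fin 2) R) (n : ℕ) :
    A ^ (n + 2) = A.trace • A ^ (n + 1) - A.det • A ^ n := by
  rw [add_comm, pow_add, sq_eq_trace_smul_sub_det_smul, sub_mul, smul_mul_assoc, smul_mul_assoc,
    one_mul, ← pow_succ']

noncomputable section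

section Homogeneous

variable {σ K : Type*} [Field K]

instance [Finite σ] (k : ℕ) : FiniteDimensional K (homogeneousSubmodule σ K k) :=
  Module.Finite.iff_fg.mpr (homogeneousSubmodule_fg σ K k)

variable (σ K) in
def basisHomogeneousOne : Module.Basis σ K (homogeneousSubmodule σ K 1) :=
  (Module.Basis.span (linearIndependent_X (R := K) (σ := σ))).map
    (LinearEquiv.ofEq _ _ homogeneousSubmodule_one_eq_span_X.symm)

theorem basisHomogeneousOne_apply (i : σ) :
    (basisHomogeneousOne σ K i : MvPolynomial σ K) = X i := by
  simp [basisHomogeneousOne]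

def homogeneousMulX (i : σ) (k : ℕ) :
    homogeneousSubmodule σ K k →ₗ[K] homogeneousSubmodule σ K (k + 1) :=
  (LinearMap.mulLeft K (X i)).restrict fun _ hp => by
    simpa [add_comm] using (isHomogeneous_X K i).mul hp

@[simp] theorem homogeneousMulX_apply_coe (i : σ) (k : ℕ) (p : homogeneousSubmodule σ K k) :
    (homogeneousMulX i k p : MvPolynomial σ K) = X i * (p : MvPolynomial σ K) :=
  rfl

theorem MvPolynomial.IsHomogeneous.of_X_mul {i : σ} {p : MvPolynomial σ K} {k : ℕ}
    (h : (X i * p).IsHomogeneous (k + 1)) : p.IsHomogeneous k := by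
  intro d hd
  have hd' : coeff (d + Finsupp.single i 1) (X i * p) ≠ 0 := by
    rwa [mul_comm, coeff_mul_X]
  simpa [Finsupp.weight_single] using h hd'

end Homogeneous

section SymPow

variable {K : Type*} [Field K] {n : ℕ} (A : Matrix (Fin n) (Fin n) K)

theorem symPowMap_apply_coe (k : ℕ) (p : homogeneousSubmodule (Fin n) K k) :
    (symPowMap A k p : MvPolynomial (Fin n) K) =
      aeval (fun i => ∑ j, A i j • X j) (p : MvPolynomial (Fin n) K) :=
  rfl

theorem symPowMap_zero : symPowMap A 0 = LinearMap.id := by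
  ext ⟨p, hp⟩
  obtain ⟨c, rfl⟩ : ∃ c, p = C c := ⟨_, totalDegree_eq_zero_iff_eq_C.mp
    ((totalDegree_zero_iff_isHomogeneous _).mpr hp)⟩
  simp [symPowMap_apply_coe]

theorem trSymPow_zero : trSymPow A 0 = 1 := by
  rw [trSymPow, symPowMap_zero, LinearMap.trace_id, homogeneousSubmodule_zero,
    Submodule.one_eq_span, finrank_span_singleton one_ne_zero, Nat.cast_one]

theorem toMatrix_symPowMap_one :
    LinearMap.toMatrix (basisHomogeneousOne (Fin n) K) (basisHomogeneousOne (Fin n) K)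
      (symPowMap A 1) = A.transpose := by
  ext i j
  have : symPowMap A 1 (basisHomogeneousOne _ _ j) = ∑ l, A j l • basisHomogeneousOne _ _ l := by
    ext1
    simp [symPowMap_apply_coe, basisHomogeneousOne_apply]
  rw [LinearMap.toMatrix_apply, this, Module.Basis.repr_sum_self, Matrix.transpose_apply]

theorem trSymPow_one : trSymPow A 1 = A.trace := by
  rw [trSymPow, LinearMap.trace_eq_matrix_trace K (basisHomogeneousOne (Fin n) K),
    toMatrix_symPowMap_one, Matrix.trace_transpose]

end SymPow

section Koszul

variable {K : Type*} [Field K]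

def koszulIncl (k : ℕ) :
    homogeneousSubmodule (Fin 2) K k →ₗ[K]
      homogeneousSubmodule (Fin 2) K (k + 1) × homogeneousSubmodule (Fin 2) K (k + 1) :=
  (homogeneousMulX 1 k).prod (-homogeneousMulX 0 k)

def koszulProj (k : ℕ) :
    homogeneousSubmodule (Fin 2) K (k + 1) × homogeneousSubmodule (Fin 2) K (k + 1) →ₗ[K]
      homogeneousSubmodule (Fin 2) K (k + 2) :=
  (homogeneousMulX 0 (k + 1)).coprod (homogeneousMulX 1 (k + 1))

theorem koszulIncl_injective (k : ℕ) : Function.Injective (koszulIncl (K := K) k) := by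
  intro p q h
  have h₁ : X 1 * (p : MvPolynomial (Fin 2) K) = X 1 * (q : MvPolynomial (Fin 2) K) :=
    congr(($h).1.val)
  exact Subtype.ext (mul_left_cancel₀ (X_ne_zero 1) h₁)

theorem koszulProj_surjective (k : ℕ) : Function.Surjective (koszulProj (K := K) k) := by
  suffices h : homogeneousSubmodule (Fin 2) K (k + 2) ≤
      (LinearMap.range (koszulProj k)).map (Submodule.subtype _) by
    intro x
    obtain ⟨_, ⟨z, rfl⟩, hzx⟩ := h x.2
    exact ⟨z, Subtype.ext hzx⟩
  have h_split : homogeneousSubmodule (Fin 2) K (k + 2) =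
      .span K (.range X) * homogeneousSubmodule (Fin 2) K (k + 1) := by
    rw [← homogeneousSubmodule_one_pow, pow_succ', homogeneousSubmodule_one_pow,
      homogeneousSubmodule_one_eq_span_X]
  refine h_split.le.trans (Submodule.mul_le.mpr fun a ha p hp => ?_)
  obtain ⟨c, rfl⟩ := (Submodule.mem_span_range_iff_exists_fun K).mp ha
  refine ⟨koszulProj k (c 0 • ⟨p, hp⟩, c 1 • ⟨p, hp⟩), ⟨_, rfl⟩, ?_⟩
  simp [koszulProj, Fin.sum_univ_two, smul_eq_C_mul]
  ring

theorem exact_koszulIncl_koszulProj (k : ℕ) :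
    Function.Exact (koszulIncl (K := K) k) (koszulProj k) := by
  refine fun y => ⟨fun h => ?_, ?_⟩
  · obtain ⟨⟨p, hp⟩, ⟨q, hq⟩⟩ := y
    have h' : X 0 * p + X 1 * q = 0 := congr(($h).val)
    obtain ⟨r, rfl⟩ : X 1 ∣ p := by
      have : X 1 ∣ X 0 * p := ⟨-q, by linear_combination h'⟩
      exact (X_prime.dvd_or_dvd this).resolve_left (by rw [X_dvd_X]; decide)
    obtain rfl : q = -(X 0 * r) :=
      mul_left_cancel₀ (X_ne_zero 1) (by linear_combination h')
    exact ⟨⟨r, hp.of_X_mul⟩, rfl⟩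
  · rintro ⟨r, rfl⟩
    ext1
    simp [koszulProj, koszulIncl]
    ring

variable (A : Matrix (Fin 2) (Fin 2) K)

/-- `Sym^(k+1) A ⊗ Aᵀ`, acting on `S^(k+1) ⊗ K² = S^(k+1) × S^(k+1)`. -/
def koszulMid (k : ℕ) :
    homogeneousSubmodule (Fin 2) K (k + 1) × homogeneousSubmodule (Fin 2) K (k + 1) →ₗ[K]
      homogeneousSubmodule (Fin 2) K (k + 1) × homogeneousSubmodule (Fin 2) K (k + 1) :=
  (A 0 0 • symPowMap A (k + 1) ∘ₗ .fst K _ _ + A 1 0 • symPowMap A (k + 1) ∘ₗ .snd K _ _).prod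
    (A 0 1 • symPowMap A (k + 1) ∘ₗ .fst K _ _ + A 1 1 • symPowMap A (k + 1) ∘ₗ .snd K _ _)

theorem koszulMid_comp_koszulIncl (k : ℕ) :
    koszulMid A k ∘ₗ koszulIncl k = koszulIncl k ∘ₗ (A.det • symPowMap A k) := by
  ext p : 1
  refine Prod.ext (Subtype.ext ?_) (Subtype.ext ?_) <;>
  · simp [koszulMid, koszulIncl, symPowMap_apply_coe, Fin.sum_univ_two, Matrix.det_fin_two,
      smul_eq_C_mul]
    ring

theorem koszulProj_comp_koszulMid (k : ℕ) :
    koszulProj k ∘ₗ koszulMid A k = symPowMap A (k + 2) ∘ₗ koszulProj k := by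
  refine LinearMap.ext fun x => Subtype.ext ?_
  simp [koszulMid, koszulProj, symPowMap_apply_coe, Fin.sum_univ_two, smul_eq_C_mul]
  ring

theorem trace_koszulMid (k : ℕ) :
    LinearMap.trace K _ (koszulMid A k) = A.trace * trSymPow A (k + 1) := by
  have h₁ : LinearMap.fst K _ _ ∘ₗ koszulMid A k ∘ₗ LinearMap.inl K _ _ =
      A 0 0 • symPowMap A (k + 1) := by
    ext; simp [koszulMid]
  have h₂ : LinearMap.snd K _ _ ∘ₗ koszulMid A k ∘ₗ LinearMap.inr K _ _ =
      A 1 1 • symPowMap A (k + 1) := by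
    ext; simp [koszulMid]
  rw [LinearMap.trace_prod_eq_add, h₁, h₂, map_smul, map_smul, Matrix.trace_fin_two, trSymPow,
    smul_eq_mul, smul_eq_mul, add_mul]

theorem trSymPow_add_two (k : ℕ) :
    trSymPow A (k + 2) = A.trace * trSymPow A (k + 1) - A.det * trSymPow A k := by
  have h := LinearMap.trace_eq_add_of_exact (exact_koszulIncl_koszulProj k)
    (koszulIncl_injective k) (koszulProj_surjective k) (koszulMid_comp_koszulIncl A k)
    (koszulProj_comp_koszulMid A k)
  rw [trace_koszulMid, map_smul, smul_eq_mul] at h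
  exact eq_sub_of_add_eq' h.symm

end Koszul

end

theorem sym_trace_eq_sigma_one_div_two_by_two
    (K : Type*) [Field K] (A : Matrix (Fin 2) (Fin 2) K)
    (σ₁ : Matrix (Fin 2) (Fin 2) K →ₗ[K] K) (hId : σ₁ 1 = 0) (hA : σ₁ A ≠ 0) :
    ∀ k : ℕ, trSymPow A k = σ₁ (A ^ (k + 1)) / σ₁ A := by
  have key : ∀ k, trSymPow A k * σ₁ A = σ₁ (A ^ (k + 1)) := by
    intro k
    induction k using Nat.twoStepInduction with
    | zero => rw [trSymPow_zero, one_mul, pow_one]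
    | one =>
      rw [trSymPow_one, A.pow_add_two_eq 0, map_sub, map_smul, map_smul, pow_zero, hId,
        smul_zero, sub_zero, pow_one, smul_eq_mul]
    | more n ih₀ ih₁ =>
      rw [trSymPow_add_two, A.pow_add_two_eq (n + 1), map_sub, map_smul, map_smul, smul_eq_mul,
        smul_eq_mul, ← ih₀, ← ih₁]
      ring
  exact fun k => eq_div_of_mul_eq hA (key k)
end

section
/- Let K be a field, n ≥ 1 an integer, and A an n×n matrix over K. Then for every integer p ≥ 0, the matrix identity Σ_{i=0}^{n} (−1)^i · tr(⋀^i A) · A^{n−i+p} = 0 holds, where tr(⋀^i A) · A^{n−i+p} denotes the scalar multiple of the matrix power A^{n−i+p}. -/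
/-- The endomorphism induced by the matrix `A` on the `i`-th exterior power of `K^n`. -/
noncomputable def extPowMap {K : Type*} [Field K] {n : ℕ} (A : Matrix (Fin n) (Fin n) K) (i : ℕ) :
    ⋀[K]^i (Fin n → K) →ₗ[K] ⋀[K]^i (Fin n → K) :=
  LinearMap.restrict (ExteriorAlgebra.map A.mulVecLin).toLinearMap
    (fun x hx => by
      have h : Submodule.map (ExteriorAlgebra.map A.mulVecLin).toLinearMap
          ((LinearMap.range
            (ExteriorAlgebra.ι K : (Fin n → K) →ₗ[K] ExteriorAlgebra K (Fin n → K))) ^ i)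
          ≤ (LinearMap.range
            (ExteriorAlgebra.ι K : (Fin n → K) →ₗ[K] ExteriorAlgebra K (Fin n → K))) ^ i := by
        rw [Submodule.map_pow]
        refine pow_le_pow_left' ?_ i
        rw [← LinearMap.range_comp, ExteriorAlgebra.map_comp_ι, LinearMap.range_comp]
        exact LinearMap.map_le_range
      exact h ⟨x, hx, rfl⟩)

/-- `trExtPow A i = tr(⋀^i A)`, the trace of the `i`-th exterior power of `A`. -/
noncomputable def trExtPow {K : Type*} [Field K] {n : ℕ} (A : Matrix (Fin n) (Fin n) K)
    (i : ℕ) : K :=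
  LinearMap.trace K _ (extPowMap A i)

/- The coefficient of `X ^ (n - i)` in the characteristic polynomial of `A` is `(-1) ^ i` times
the sum of the `i × i` principal minors of `A`, and so is `(-1) ^ i * tr(⋀^i A)`: in the basis
`e_{s₁} ∧ ⋯ ∧ e_{sᵢ}` of `⋀^i K^n`, the diagonal entry of `⋀^i A` at `s` is the principal minor
indexed by `s`. The identity is therefore Cayley–Hamilton, `χ_A(A) = 0`, multiplied by `A ^ p`. -/

theorem Matrix.det_submatrix_orderEmbOfFin {R I : Type*} [CommRing R] [LinearOrder I]
    (M : Matrix I I R) {s : Finset I} {k : ℕ} (h : s.card = k) :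
    (M.submatrix (s.orderEmbOfFin h) (s.orderEmbOfFin h)).det =
      (M.submatrix (Subtype.val : s → I) Subtype.val).det :=
  det_submatrix_equiv_self (s.orderIsoOfFin h).toEquiv (M.submatrix Subtype.val Subtype.val)

open exteriorPower in
theorem LinearMap.trace_exteriorPower_map {R M I : Type*} [CommRing R] [AddCommGroup M]
    [Module R M] [Fintype I] [LinearOrder I] (b : Module.Basis I R M) (f : M →ₗ[R] M) (k : ℕ) :
    trace R _ (exteriorPower.map k f) = ∑ s ∈ Finset.univ.powersetCard k,
      ((toMatrix b b f).submatrix (Subtype.val : s → I) Subtype.val).det := by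
  classical
  rw [trace_eq_matrix_trace R (b.exteriorPower k), Matrix.trace,
    Finset.sum_subtype (p := (· ∈ Set.powersetCard I k)) _ (fun s => by simp)]
  refine Finset.sum_congr rfl fun s _ => ?_
  rw [Matrix.diag_apply, toMatrix_apply, basis_repr_apply, basis_apply, map_apply_ιMulti_family,
    ιMulti_family, ιMultiDual_apply_ιMulti, ← Matrix.det_submatrix_orderEmbOfFin _ s.2,
    ← Matrix.det_transpose]
  congr 1
  ext i j
  simp [toMatrix_apply, Set.powersetCard.ofFinEmbEquiv_symm_apply]

theorem Matrix.sum_range_charpoly_coeff_smul_pow_add {R ι : Type*} [CommRing R] [Nontrivial R]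
    [Fintype ι] [DecidableEq ι] (M : Matrix ι ι R) (p : ℕ) :
    ∑ i ∈ Finset.range (Fintype.card ι + 1),
      M.charpoly.coeff (Fintype.card ι - i) • M ^ (Fintype.card ι - i + p) = 0 := by
  have h := M.aeval_self_charpoly
  rw [Polynomial.aeval_eq_sum_range, M.charpoly_natDegree_eq_dim, ← Finset.sum_range_reflect] at h
  simpa only [Finset.sum_mul, smul_mul_assoc, ← pow_add, zero_mul, Nat.add_sub_cancel]
    using congrArg (· * M ^ p) h

theorem extPowMap_eq_map {K : Type*} [Field K] {n : ℕ} (A : Matrix (Fin n) (Fin n) K) (i : ℕ) :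
    extPowMap A i = exteriorPower.map i A.mulVecLin := by
  ext v
  simp [extPowMap, ExteriorAlgebra.map_apply_ιMulti, Function.comp_def]

theorem trExtPow_eq_sum_minors {K : Type*} [Field K] {n : ℕ} (A : Matrix (Fin n) (Fin n) K)
    (i : ℕ) : trExtPow A i = ∑ s ∈ Finset.univ.powersetCard i,
      (A.submatrix (Subtype.val : s → Fin n) Subtype.val).det := by
  rw [trExtPow, extPowMap_eq_map, LinearMap.trace_exteriorPower_map (Pi.basisFun K (Fin n)),
    LinearMap.toMatrix_eq_toMatrix', ← Matrix.toLin'_apply', LinearMap.toMatrix'_toLin']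

theorem charpoly_coeff_eq_neg_one_pow_mul_trExtPow {K : Type*} [Field K] {n : ℕ}
    (A : Matrix (Fin n) (Fin n) K) {i : ℕ} (hi : i ≤ n) :
    A.charpoly.coeff (n - i) = (-1) ^ i * trExtPow A i := by
  simpa [trExtPow_eq_sum_minors] using A.charpoly_coeff_eq_sum_minors i (by simpa using hi)

theorem cayley_hamilton_pow_general
    (K : Type*) [Field K] (n : ℕ) (A : Matrix (Fin n) (Fin n) K) :
    ∀ p : ℕ,
      ∑ i ∈ Finset.range (n + 1), ((-1 : K) ^ i * trExtPow A i) • A ^ (n - i + p) = 0 := by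
  intro p
  have h := A.sum_range_charpoly_coeff_smul_pow_add p
  rw [Fintype.card_fin] at h
  rw [← h]
  refine Finset.sum_congr rfl fun i hi => ?_
  rw [charpoly_coeff_eq_neg_one_pow_mul_trExtPow A (Finset.mem_range_succ_iff.mp hi)]

theorem cayley_hamilton_pow
    (K : Type*) [Field K] (n : ℕ) (hn : 1 ≤ n) (A : Matrix (Fin n) (Fin n) K) :
    ∀ p : ℕ,
      ∑ i ∈ Finset.range (n + 1), ((-1 : K) ^ i * trExtPow A i) • A ^ (n - i + p) = 0 :=
  cayley_hamilton_pow_general K n A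
end

section
/- Let K be a field, A a 2×2 matrix over K, and P an invertible 2×2 matrix over K; set B = P·A·P⁻¹. Assume the (1,2) entry of A and the (1,2) entry of B are both nonzero. Then for every integer k ≥ 0, the quantity b_{k+1}/b is invariant under this conjugation: (B^{k+1})_{12} / B_{12} = (A^{k+1})_{12} / A_{12}, where M_{12} denotes the (1,2) entry of a matrix M. -/
lemma sq_eq_trace_smul_sub_det_smul {K : Type*} [Field K] (M : Matrix (Fin 2) (Fin 2) K) :
    M ^ 2 = M.trace • M - M.det • (1 : Matrix (Fin 2) (Fin 2) K) := by
  ext i j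
  fin_cases i <;> fin_cases j <;>
    simp [pow_two, Matrix.mul_apply, Matrix.trace, Matrix.det_fin_two, Fin.sum_univ_two,
      Matrix.one_apply] <;> ring

theorem entry_pow_div_invariant_under_conjugation
    (K : Type*) [Field K] (A P : Matrix (Fin 2) (Fin 2) K) (hP : IsUnit P)
    (B : Matrix (Fin 2) (Fin 2) K) (hB : B = P * A * P⁻¹)
    (hA12 : A 0 1 ≠ 0) (hB12 : B 0 1 ≠ 0) :
    ∀ k : ℕ, (B ^ (k + 1)) 0 1 / B 0 1 = (A ^ (k + 1)) 0 1 / A 0 1 := by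
  have hdet : IsUnit P.det := (Matrix.isUnit_iff_isUnit_det P).mp hP
  have htr : B.trace = A.trace := by
    rw [hB, Matrix.trace_mul_comm, ← Matrix.mul_assoc, Matrix.nonsing_inv_mul P hdet, one_mul]
  have hdetB : B.det = A.det := by
    rw [hB, Matrix.det_mul, Matrix.det_mul, Matrix.det_nonsing_inv]
    rw [Ring.inverse_eq_inv', mul_comm, ← mul_assoc, inv_mul_cancel₀ hdet.ne_zero, one_mul]
  have key : ∀ k : ℕ, ∃ c d : K,
      A ^ (k + 1) = c • A + d • (1 : Matrix (Fin 2) (Fin 2) K) ∧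
      B ^ (k + 1) = c • B + d • (1 : Matrix (Fin 2) (Fin 2) K) := by
    intro k
    induction k with
    | zero => exact ⟨1, 0, by simp, by simp⟩
    | succ n ih =>
      obtain ⟨c, d, hA', hB'⟩ := ih
      refine ⟨c * A.trace + d, -(c * A.det), ?_, ?_⟩
      · have : A ^ (n + 1 + 1) = (A ^ (n + 1)) * A := pow_succ A (n+1)
        rw [this, hA', add_mul, smul_mul_assoc, smul_mul_assoc, one_mul,
          ← pow_two, sq_eq_trace_smul_sub_det_smul]
        ext i j
        simp [Matrix.add_apply, Matrix.sub_apply, Matrix.smul_apply]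
        ring
      · have : B ^ (n + 1 + 1) = (B ^ (n + 1)) * B := pow_succ B (n+1)
        rw [this, hB', add_mul, smul_mul_assoc, smul_mul_assoc, one_mul,
          ← pow_two, sq_eq_trace_smul_sub_det_smul, htr, hdetB]
        ext i j
        simp [Matrix.add_apply, Matrix.sub_apply, Matrix.smul_apply]
        ring
  intro k
  obtain ⟨c, d, hA', hB'⟩ := key k
  rw [hA', hB']
  simp [Matrix.add_apply, Matrix.smul_apply, Matrix.one_apply]
  field_simp
end
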